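/- Let X : {q₀,…,q_J} → ℝ² be a polygonal curve with consecutive vertices distinct, and suppose at an interior vertex q_j the vector ω_j = −(X(q_{j+1}) − X(q_{j−1}))⊥ satisfies: the tangential balance condition ((X(q_{j+1}) − X(q_j))/|X(q_{j+1}) − X(q_j)| − (X(q_j) − X(q_{j−1}))/|X(q_j) − X(q_{j−1})|) · ω_j⊥ = 0. Then either |X(q_j) − X(q_{j−1})| = |X(q_{j+1}) − X(q_j)| or the two edge vectors X(q_j) − X(q_{j−1}) and X(q_{j+1}) − X(q_j) are parallel. -/

import Mathlib

open scoped RealInnerProductSpace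

/-- Clockwise rotation by π/2 in ℝ²: (v₁, v₂)⊥ = (v₂, −v₁). -/
noncomputable def perp (v : EuclideanSpace ℝ (Fin 2)) : EuclideanSpace ℝ (Fin 2) :=
  WithLp.toLp 2 ![v 1, -v 0]

/-!
With edge vectors `x = b - a` and `y = c - b` the test vector is `perp (-perp (c - a)) = y + x`,
so the hypothesis reads `⟪y / ‖y‖ - x / ‖x‖, y + x⟫ = 0`. This inner product factors as
`(‖y‖ - ‖x‖) * (1 - cos θ)`, where `θ` is the angle between the edges: either the edges have
equal length, or `cos θ = 1` and they are positively parallel.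
-/

lemma perp_neg_perp (v : EuclideanSpace ℝ (Fin 2)) : perp (-perp v) = v := by
  ext i
  fin_cases i <;> simp [perp]

section InnerProductSpace

variable {F : Type*} [NormedAddCommGroup F] [InnerProductSpace ℝ F]

lemma real_inner_inv_norm_smul_self (x : F) : ⟪‖x‖⁻¹ • x, x⟫ = ‖x‖ := by
  rw [real_inner_smul_left, real_inner_self_eq_norm_sq, sq, ← mul_assoc, inv_mul_mul_self]

/-- For `x = 0` both sides equal `‖y‖`, thanks to the junk values `0⁻¹ = 0` and `t / 0 = 0`. -/
lemma inner_inv_norm_smul_sub_inv_norm_smul_add (x y : F) :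
    ⟪‖y‖⁻¹ • y - ‖x‖⁻¹ • x, y + x⟫ = (‖y‖ - ‖x‖) * (1 - ⟪x, y⟫ / (‖x‖ * ‖y‖)) := by
  rcases eq_or_ne x 0 with rfl | hx
  · simp [real_inner_inv_norm_smul_self]
  rcases eq_or_ne y 0 with rfl | hy
  · simp [real_inner_inv_norm_smul_self]
  have hx' : ‖x‖ ≠ 0 := norm_ne_zero_iff.mpr hx
  have hy' : ‖y‖ ≠ 0 := norm_ne_zero_iff.mpr hy
  simp only [inner_sub_left, inner_add_right, real_inner_smul_left, real_inner_self_eq_norm_sq,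
    real_inner_comm x y]
  field_simp
  ring

lemma norm_eq_or_exists_smul_of_inner_inv_norm_smul_sub_add_eq_zero {x y : F}
    (h : ⟪‖y‖⁻¹ • y - ‖x‖⁻¹ • x, y + x⟫ = 0) : ‖x‖ = ‖y‖ ∨ ∃ t : ℝ, y = t • x := by
  rw [inner_inv_norm_smul_sub_inv_norm_smul_add, mul_eq_zero, sub_eq_zero, sub_eq_zero] at h
  rcases h with hnorm | hcos
  · exact Or.inl hnorm.symm
  · obtain ⟨-, t, -, hyx⟩ := (real_inner_div_norm_mul_norm_eq_one_iff x y).mp hcos.symm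
    exact Or.inr ⟨t, hyx⟩

end InnerProductSpace

theorem discrete_equidistribution_general (a b c : EuclideanSpace ℝ (Fin 2))
    (h : ⟪‖c - b‖⁻¹ • (c - b) - ‖b - a‖⁻¹ • (b - a), perp (-perp (c - a))⟫ = 0) :
    ‖b - a‖ = ‖c - b‖ ∨ ∃ t : ℝ, c - b = t • (b - a) := by
  rw [perp_neg_perp, ← sub_add_sub_cancel c b a] at h
  exact norm_eq_or_exists_smul_of_inner_inv_norm_smul_sub_add_eq_zero h

/-- Equidistribution property: at an interior vertex `b` of a polygonal curve
`a, b, c` with vertex normal `ω = −(c − a)⊥`, if the difference of the unit edge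
tangents is orthogonal to `ω⊥`, then either the two edges have equal length or
they are parallel. -/
theorem discrete_equidistribution (a b c : EuclideanSpace ℝ (Fin 2))
    (hab : b ≠ a) (hbc : c ≠ b) (hac : c ≠ a)
    (h : ⟪‖c - b‖⁻¹ • (c - b) - ‖b - a‖⁻¹ • (b - a), perp (-perp (c - a))⟫ = 0) :
    ‖b - a‖ = ‖c - b‖ ∨ ∃ t : ℝ, c - b = t • (b - a) :=
  discrete_equidistribution_general a b c h
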